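/- In a finite partially ordered set, the maximum size of an antichain equals the minimum number of chains needed to cover all elements (Dilworth's theorem). -/

import Mathlib

open Classical in
/-- Easy direction: an antichain is at most as large as any chain cover of it. -/
lemma dil_easy {α : Type*} [PartialOrder α] {A : Finset α} {𝒟 : Finset (Set α)}
    (hA : IsAntichain (· ≤ ·) (↑A : Set α))
    (hch : ∀ C ∈ 𝒟, IsChain (· ≤ ·) C)
    (hcov : ∀ x ∈ A, ∃ C ∈ 𝒟, x ∈ C) : A.card ≤ 𝒟.card := by
  classical
  set f : α → Set α := fun x => if h : ∃ C ∈ 𝒟, x ∈ C then h.choose else ∅ with hf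
  have hfmem : ∀ x ∈ A, f x ∈ 𝒟 ∧ x ∈ f x := by
    intro x hx
    have h : ∃ C ∈ 𝒟, x ∈ C := hcov x hx
    simp only [hf, dif_pos h]
    exact ⟨h.choose_spec.1, h.choose_spec.2⟩
  refine Finset.card_le_card_of_injOn f (fun x hx => (hfmem x hx).1) ?_
  intro x hx y hy hxy
  by_contra hne
  have hcx := (hfmem x hx).2
  have hcy := (hfmem y hy).2
  rw [hxy] at hcx
  have := (hch _ (hfmem y hy).1).total hcx hcy
  rcases this with h | h
  · exact hA hx hy hne h
  · exact hA hy hx (Ne.symm hne) h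

/-- Easy direction, Finset chains version. -/
lemma dil_easy' {α : Type*} [PartialOrder α] {A : Finset α} {𝒞 : Finset (Finset α)}
    (hA : IsAntichain (· ≤ ·) (↑A : Set α))
    (hch : ∀ C ∈ 𝒞, IsChain (· ≤ ·) (↑C : Set α))
    (hcov : ∀ x ∈ A, ∃ C ∈ 𝒞, x ∈ C) : A.card ≤ 𝒞.card := by
  classical
  have h1 : A.card ≤ (𝒞.image ((↑) : Finset α → Set α)).card := by
    refine dil_easy hA ?_ ?_
    · intro C hC
      simp only [Finset.mem_image] at hC
      obtain ⟨D, hD, rfl⟩ := hC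
      exact hch D hD
    · intro x hx
      obtain ⟨C, hC, hxC⟩ := hcov x hx
      exact ⟨↑C, Finset.mem_image_of_mem _ hC, by exact_mod_cast hxC⟩
  exact h1.trans (Finset.card_image_le)

/-- Key induction: every finite subset has a disjoint chain cover together with an
antichain of the same size (Galvin's proof of Dilworth's theorem). -/
lemma dil_key {α : Type*} [PartialOrder α] [DecidableEq α] (S : Finset α) :
    ∃ (𝒞 : Finset (Finset α)) (A : Finset α),
      (∀ C ∈ 𝒞, IsChain (· ≤ ·) (↑C : Set α) ∧ C ⊆ S) ∧
      (∀ x ∈ S, ∃ C ∈ 𝒞, x ∈ C) ∧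
      (∀ C ∈ 𝒞, ∀ C' ∈ 𝒞, C ≠ C' → Disjoint C C') ∧
      A ⊆ S ∧ IsAntichain (· ≤ ·) (↑A : Set α) ∧ A.card = 𝒞.card := by
  classical
  induction S using Finset.strongInductionOn with
  | _ S ih =>
  rcases S.eq_empty_or_nonempty with rfl | hSne
  · exact ⟨∅, ∅, by simp, by simp, by simp, by simp, by simp [IsAntichain], by simp⟩
  -- pick a maximal element a of S
  obtain ⟨a, haS, hamax⟩ :=
    Set.Finite.exists_maximalFor id (↑S : Set α) S.finite_toSet (by exact_mod_cast hSne)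
  have hamax' : ∀ x ∈ S, a ≤ x → a = x := by
    intro x hx h; exact le_antisymm h (hamax (by exact_mod_cast hx) h)
  set S' := S.erase a with hS'
  have hS'sub : S' ⊆ S := Finset.erase_subset _ _
  have hS'ssub : S' ⊂ S := Finset.erase_ssubset haS
  obtain ⟨𝒞', A', h𝒞', hcov', hdisj', hA'S, hA'anti, hA'card⟩ := ih S' hS'ssub
  set k := 𝒞'.card with hk
  -- every antichain of S' of size k meets every chain of 𝒞'
  have meets : ∀ B : Finset α, B ⊆ S' → IsAntichain (· ≤ ·) (↑B : Set α) → B.card = k →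
      ∀ C ∈ 𝒞', ∃ x ∈ B, x ∈ C := by
    intro B hBS hBanti hBcard C hC
    set g : α → Finset α := fun x => if h : ∃ D ∈ 𝒞', x ∈ D then h.choose else ∅ with hg
    have hgmem : ∀ x ∈ B, g x ∈ 𝒞' ∧ x ∈ g x := by
      intro x hx
      have h : ∃ D ∈ 𝒞', x ∈ D := hcov' x (hBS hx)
      simp only [hg, dif_pos h]
      exact ⟨h.choose_spec.1, h.choose_spec.2⟩
    have hinj : Set.InjOn g ↑B := by
      intro x hx y hy hxy
      by_contra hne
      have hcx := (hgmem x hx).2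
      have hcy := (hgmem y hy).2
      rw [hxy] at hcx
      rcases (h𝒞' _ (hgmem y hy).1).1.total (by exact_mod_cast hcx) (by exact_mod_cast hcy)
        with h | h
      · exact hBanti hx hy hne h
      · exact hBanti hy hx (Ne.symm hne) h
    have himg : B.image g = 𝒞' := by
      apply Finset.eq_of_subset_of_card_le
      · intro D hD
        simp only [Finset.mem_image] at hD
        obtain ⟨x, hx, rfl⟩ := hD
        exact (hgmem x hx).1
      · rw [Finset.card_image_of_injOn hinj, hBcard]
    have : C ∈ B.image g := himg ▸ hC
    simp only [Finset.mem_image] at this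
    obtain ⟨x, hx, rfl⟩ := this
    exact ⟨x, hx, (hgmem x hx).2⟩
  -- candidate sets and maximal choices
  set cand : Finset α → Finset α := fun C =>
    C.filter (fun x => ∃ B : Finset α, B ⊆ S' ∧ IsAntichain (· ≤ ·) (↑B : Set α) ∧
      B.card = k ∧ x ∈ B) with hcand
  have hcandne : ∀ C ∈ 𝒞', (cand C).Nonempty := by
    intro C hC
    obtain ⟨x, hxA, hxC⟩ := meets A' hA'S hA'anti hA'card C hC
    exact ⟨x, Finset.mem_filter.2 ⟨hxC, A', hA'S, hA'anti, hA'card, hxA⟩⟩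
  set f : Finset α → α := fun C =>
    if h : (cand C).Nonempty then
      (Set.Finite.exists_maximalFor id (↑(cand C) : Set α) (cand C).finite_toSet
        (by exact_mod_cast h)).choose
    else a with hfdef
  have hfspec : ∀ C ∈ 𝒞', f C ∈ cand C ∧ ∀ x ∈ cand C, f C ≤ x → f C = x := by
    intro C hC
    have h := hcandne C hC
    simp only [hfdef, dif_pos h]
    obtain ⟨h1, h2⟩ :=
      (Set.Finite.exists_maximalFor id (↑(cand C) : Set α) (cand C).finite_toSet
        (by exact_mod_cast h)).choose_spec
    refine ⟨by exact_mod_cast h1, ?_⟩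
    intro x hx hle
    exact le_antisymm hle (h2 (by exact_mod_cast hx) hle)
  have hfC : ∀ C ∈ 𝒞', f C ∈ C := fun C hC => Finset.mem_filter.1 (hfspec C hC).1 |>.1
  have hfS' : ∀ C ∈ 𝒞', f C ∈ S' := fun C hC => ((h𝒞' C hC).2) (hfC C hC)
  -- key property: any k-antichain of S' meets C below f C
  have P1 : ∀ C ∈ 𝒞', ∀ B : Finset α, B ⊆ S' → IsAntichain (· ≤ ·) (↑B : Set α) →
      B.card = k → ∃ x ∈ B, x ∈ C ∧ x ≤ f C := by
    intro C hC B hBS hBanti hBcard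
    obtain ⟨x, hxB, hxC⟩ := meets B hBS hBanti hBcard C hC
    have hxcand : x ∈ cand C := Finset.mem_filter.2 ⟨hxC, B, hBS, hBanti, hBcard, hxB⟩
    have hcomp := (h𝒞' C hC).1.total (x := f C) (y := x)
      (by exact_mod_cast hfC C hC) (by exact_mod_cast hxC)
    rcases hcomp with h | h
    · have := (hfspec C hC).2 x hxcand h
      exact ⟨x, hxB, hxC, this ▸ le_refl _⟩
    · exact ⟨x, hxB, hxC, h⟩
  -- T := image of f, an antichain of size k
  set T : Finset α := 𝒞'.image f with hT
  have hfinj : Set.InjOn f ↑𝒞' := by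
    intro C hC C' hC' hEq
    by_contra hne
    have h1 : f C ∈ C := hfC C hC
    have h2 : f C ∈ C' := hEq ▸ hfC C' hC'
    exact (hdisj' C hC C' hC' hne).forall_ne_finset h1 h2 rfl
  have hTcard : T.card = k := by rw [hT, Finset.card_image_of_injOn hfinj, hk]
  have hTanti : IsAntichain (· ≤ ·) (↑T : Set α) := by
    intro x hx y hy hne hle
    simp only [hT, Finset.coe_image, Set.mem_image, Finset.mem_coe] at hx hy
    obtain ⟨C, hC, rfl⟩ := hx
    obtain ⟨C', hC', rfl⟩ := hy
    have hCC' : C ≠ C' := by rintro rfl; exact hne rfl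
    -- f C' belongs to some k-antichain B'
    obtain ⟨-, B', hB'S, hB'anti, hB'card, hfB'⟩ := Finset.mem_filter.1 (hfspec C' hC').1
    obtain ⟨z, hzB', hzC, hzle⟩ := P1 C hC B' hB'S hB'anti hB'card
    have hzfC' : z ≤ f C' := hzle.trans hle
    by_cases hzz : z = f C'
    · exact (hdisj' C hC C' hC' hCC').forall_ne_finset hzC (hzz ▸ hfC C' hC') rfl
    · exact hB'anti hzB' hfB' hzz hzfC'
  have hTS' : ∀ x ∈ T, x ∈ S' := by
    intro x hx
    simp only [hT, Finset.mem_image] at hx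
    obtain ⟨C, hC, rfl⟩ := hx
    exact hfS' C hC
  by_cases hcase : ∃ C ∈ 𝒞', f C ≤ a
  · -- a sits above some f C: extend that chain with a, recurse on the rest
    obtain ⟨C, hC, hba⟩ := hcase
    set b := f C with hb
    set K : Finset α := insert a (C.filter (· ≤ b)) with hK
    have haK : a ∈ K := Finset.mem_insert_self _ _
    have hKS : K ⊆ S := by
      intro x hx
      rcases Finset.mem_insert.1 hx with rfl | hx
      · exact haS
      · exact hS'sub ((h𝒞' C hC).2 (Finset.mem_filter.1 hx).1)
    have hKchain : IsChain (· ≤ ·) (↑K : Set α) := by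
      intro x hx y hy hne
      simp only [hK, Finset.coe_insert, Set.mem_insert_iff, Finset.mem_coe,
        Finset.mem_filter] at hx hy
      rcases hx with rfl | ⟨hxC, hxb⟩
      · rcases hy with rfl | ⟨hyC, hyb⟩
        · exact absurd rfl hne
        · exact Or.inr (hyb.trans hba)
      · rcases hy with rfl | ⟨hyC, hyb⟩
        · exact Or.inl (hxb.trans hba)
        · exact (h𝒞' C hC).1 (by exact_mod_cast hxC) (by exact_mod_cast hyC) hne
    have hSdiff : S \ K ⊂ S := by
      refine Finset.sdiff_ssubset ?_ ?_
      · exact hKS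
      · exact ⟨a, haK⟩
    obtain ⟨𝒟, A'', h𝒟, hcov'', hdisj'', hA''S, hA''anti, hA''card⟩ := ih (S \ K) hSdiff
    have hSKS' : S \ K ⊆ S' := by
      intro x hx
      obtain ⟨hxS, hxK⟩ := Finset.mem_sdiff.1 hx
      exact Finset.mem_erase.2 ⟨fun h => hxK (h ▸ haK), hxS⟩
    -- 𝒟.card ≤ k - 1
    have hlt : A''.card < k := by
      by_contra hge
      push_neg at hge
      obtain ⟨B, hBsub, hBcard⟩ := Finset.exists_subset_card_eq hge
      have hBanti : IsAntichain (· ≤ ·) (↑B : Set α) :=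
        hA''anti.subset (by exact_mod_cast hBsub)
      have hBS' : B ⊆ S' := fun x hx => hSKS' (hA''S (hBsub hx))
      obtain ⟨z, hzB, hzC, hzle⟩ := P1 C hC B hBS' hBanti hBcard
      have hzK : z ∈ K := Finset.mem_insert.2 (Or.inr (Finset.mem_filter.2 ⟨hzC, hzle⟩))
      exact (Finset.mem_sdiff.1 (hA''S (hBsub hzB))).2 hzK
    -- cover of S and counting
    have hKnotin : K ∉ 𝒟 := by
      intro h
      have := (h𝒟 K h).2 haK
      exact (Finset.mem_sdiff.1 this).2 haK
    have hcovS : ∀ x ∈ S, ∃ D ∈ insert K 𝒟, x ∈ D := by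
      intro x hx
      by_cases hxK : x ∈ K
      · exact ⟨K, Finset.mem_insert_self _ _, hxK⟩
      · obtain ⟨D, hD, hxD⟩ := hcov'' x (Finset.mem_sdiff.2 ⟨hx, hxK⟩)
        exact ⟨D, Finset.mem_insert_of_mem hD, hxD⟩
    have hge : k ≤ 𝒟.card + 1 := by
      have := dil_easy' (A := A') (𝒞 := insert K 𝒟) hA'anti ?_ ?_
      · calc k = A'.card := hA'card.symm
          _ ≤ (insert K 𝒟).card := this
          _ ≤ 𝒟.card + 1 := Finset.card_insert_le _ _
      · intro D hD
        rcases Finset.mem_insert.1 hD with rfl | hD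
        · exact hKchain
        · exact (h𝒟 D hD).1
      · intro x hx
        exact hcovS x (hS'sub (hA'S hx))
    have hcardeq : 𝒟.card + 1 = k := by
      have h1 : 𝒟.card < k := hA''card ▸ hlt
      omega
    refine ⟨insert K 𝒟, A', ?_, hcovS, ?_, fun x hx => hS'sub (hA'S hx), hA'anti, ?_⟩
    · intro D hD
      rcases Finset.mem_insert.1 hD with rfl | hD
      · exact ⟨hKchain, hKS⟩
      · exact ⟨(h𝒟 D hD).1, fun x hx => (Finset.mem_sdiff.1 ((h𝒟 D hD).2 hx)).1⟩
    · intro D hD D' hD' hne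
      rcases Finset.mem_insert.1 hD with rfl | hD2 <;>
        rcases Finset.mem_insert.1 hD' with rfl | hD2'
      · exact absurd rfl hne
      · exact Finset.disjoint_left.2 fun x hxK hxD' =>
          (Finset.mem_sdiff.1 ((h𝒟 D' hD2').2 hxD')).2 hxK
      · exact Finset.disjoint_left.2 fun x hxD hxK =>
          (Finset.mem_sdiff.1 ((h𝒟 D hD2).2 hxD)).2 hxK
      · exact hdisj'' D hD2 D' hD2' hne
    · rw [Finset.card_insert_of_notMem hKnotin]
      omega
  · -- a is incomparable with every f C: new antichain insert a T, cover insert {a} 𝒞'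
    push_neg at hcase
    have hainc : ∀ x ∈ T, ¬ x ≤ a ∧ ¬ a ≤ x := by
      intro x hx
      simp only [hT, Finset.mem_image] at hx
      obtain ⟨C, hC, rfl⟩ := hx
      refine ⟨hcase C hC, fun h => ?_⟩
      have hne : a ≠ f C := by
        intro h'
        exact (Finset.mem_erase.1 (hfS' C hC)).1 h'.symm
      exact hne (hamax' (f C) (hS'sub (hfS' C hC)) h)
    have hanotT : a ∉ T := fun h => (Finset.mem_erase.1 (hTS' a h)).1 rfl
    have hanotS' : {a} ∉ 𝒞' := by
      intro h
      have := (h𝒞' {a} h).2 (Finset.mem_singleton_self a)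
      exact (Finset.mem_erase.1 this).1 rfl
    refine ⟨insert {a} 𝒞', insert a T, ?_, ?_, ?_, ?_, ?_, ?_⟩
    · intro D hD
      rcases Finset.mem_insert.1 hD with rfl | hD
      · refine ⟨?_, by simpa using haS⟩
        intro x hx y hy hne
        simp only [Finset.coe_singleton, Set.mem_singleton_iff] at hx hy
        exact absurd (hx.trans hy.symm) hne
      · exact ⟨(h𝒞' D hD).1, (h𝒞' D hD).2.trans hS'sub⟩
    · intro x hx
      by_cases hxa : x = a
      · exact ⟨{a}, Finset.mem_insert_self _ _, by simp [hxa]⟩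
      · obtain ⟨D, hD, hxD⟩ := hcov' x (Finset.mem_erase.2 ⟨hxa, hx⟩)
        exact ⟨D, Finset.mem_insert_of_mem hD, hxD⟩
    · intro D hD D' hD' hne
      rcases Finset.mem_insert.1 hD with rfl | hD2 <;>
        rcases Finset.mem_insert.1 hD' with rfl | hD2'
      · exact absurd rfl hne
      · refine Finset.disjoint_left.2 fun x hx hx' => ?_
        rw [Finset.mem_singleton] at hx
        subst hx
        exact (Finset.mem_erase.1 ((h𝒞' D' hD2').2 hx')).1 rfl
      · refine Finset.disjoint_left.2 fun x hx hx' => ?_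
        rw [Finset.mem_singleton] at hx'
        subst hx'
        exact (Finset.mem_erase.1 ((h𝒞' D hD2).2 hx)).1 rfl
      · exact hdisj' D hD2 D' hD2' hne
    · intro x hx
      rcases Finset.mem_insert.1 hx with rfl | hx
      · exact haS
      · exact hS'sub (hTS' x hx)
    · intro x hx y hy hne hle
      simp only [Finset.coe_insert, Set.mem_insert_iff, Finset.mem_coe] at hx hy
      rcases hx with rfl | hx
      · rcases hy with rfl | hy
        · exact hne rfl
        · exact (hainc y hy).2 hle
      · rcases hy with rfl | hy
        · exact (hainc x hx).1 hle
        · exact hTanti hx hy hne hle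
    · rw [Finset.card_insert_of_notMem hanotT,
        Finset.card_insert_of_notMem hanotS', hTcard]

/-- Dilworth's theorem: in a finite partially ordered set, the maximum size of
an antichain equals the minimum number of chains needed to cover all
elements. -/
theorem stmt_13 {α : Type*} [PartialOrder α] [Fintype α] :
    ∃ n : ℕ,
      IsGreatest {m | ∃ A : Finset α, IsAntichain (· ≤ ·) (↑A : Set α) ∧ A.card = m} n ∧
      IsLeast {m | ∃ 𝒞 : Finset (Set α), (∀ C ∈ 𝒞, IsChain (· ≤ ·) C) ∧
        ⋃₀ (↑𝒞 : Set (Set α)) = Set.univ ∧ 𝒞.card = m} n := by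
  classical
  obtain ⟨𝒞, A, h𝒞, hcov, hdisj, hAS, hAanti, hAcard⟩ := dil_key (Finset.univ : Finset α)
  refine ⟨𝒞.card, ⟨⟨A, hAanti, hAcard⟩, ?_⟩, ⟨⟨𝒞.image ((↑) : Finset α → Set α), ?_, ?_, ?_⟩, ?_⟩⟩
  · rintro m ⟨B, hBanti, rfl⟩
    exact dil_easy' hBanti (fun C hC => (h𝒞 C hC).1)
      (fun x _ => hcov x (Finset.mem_univ x))
  · intro C hC
    simp only [Finset.mem_image] at hC
    obtain ⟨D, hD, rfl⟩ := hC
    exact (h𝒞 D hD).1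
  · ext x
    simp only [Set.mem_sUnion, Set.mem_univ, iff_true, Finset.coe_image, Set.mem_image,
      Finset.mem_coe]
    obtain ⟨C, hC, hxC⟩ := hcov x (Finset.mem_univ x)
    exact ⟨↑C, ⟨C, hC, rfl⟩, by exact_mod_cast hxC⟩
  · exact Finset.card_image_of_injective _ Finset.coe_injective
  · rintro m ⟨𝒟, h𝒟, hU, rfl⟩
    rw [← hAcard]
    refine dil_easy hAanti h𝒟 ?_
    intro x _
    have : x ∈ ⋃₀ (↑𝒟 : Set (Set α)) := hU ▸ Set.mem_univ x
    obtain ⟨C, hC, hxC⟩ := this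
    exact ⟨C, by exact_mod_cast hC, hxC⟩
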